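/- Let m ≥ 2 and let B ⊆ ℝ^m be a convex body. If the boundary ∂B contains an affine line {a + t d : t ∈ ℝ} with d ≠ 0, then ∂B is ruled by lines parallel to d: for every p ∈ ∂B and every t ∈ ℝ, the point p + t d lies in ∂B. -/

import Mathlib

open Set Filter Topology

section LineInvariance

variable {E : Type*} [AddCommGroup E] [Module ℝ E] [TopologicalSpace E]
  [IsTopologicalAddGroup E]

/-- `x + t • d` is the limit, as `s → 0⁺`, of the points
`(1 - s) • x + s • (a + (t / s) • d) = x + s • (a - x) + t • d` of `C`. -/
theorem Convex.add_smul_mem_of_forall_add_smul_mem [ContinuousSMul ℝ E] {C : Set E}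
    (hconv : Convex ℝ C) (hclosed : IsClosed C) {a d : E} (hline : ∀ t : ℝ, a + t • d ∈ C)
    {x : E} (hx : x ∈ C) (t : ℝ) : x + t • d ∈ C := by
  have hmem : ∀ s ∈ Ioc (0 : ℝ) 1, x + s • (a - x) + t • d ∈ C := by
    rintro s ⟨hs₀, hs₁⟩
    have hcomb : (1 - s) • x + s • (a + (t / s) • d) = x + s • (a - x) + t • d := by
      rw [smul_add, smul_smul, mul_div_cancel₀ t hs₀.ne', sub_smul, one_smul, smul_sub]
      abel
    rw [← hcomb]
    exact hconv hx (hline (t / s)) (sub_nonneg.mpr hs₁) hs₀.le (sub_add_cancel 1 s)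
  have hlim : Tendsto (fun s : ℝ => x + s • (a - x) + t • d) (𝓝[>] 0) (𝓝 (x + t • d)) := by
    have hcont : Continuous fun s : ℝ => x + s • (a - x) + t • d := by fun_prop
    simpa using (hcont.tendsto 0).mono_left nhdsWithin_le_nhds
  exact hclosed.mem_of_tendsto hlim
    (mem_of_superset (Ioc_mem_nhdsGT zero_lt_one) hmem)

theorem add_smul_mem_frontier_of_forall_add_smul_mem {C : Set E} {d : E}
    (hC : ∀ x ∈ C, ∀ t : ℝ, x + t • d ∈ C) {p : E} (hp : p ∈ frontier C) (t : ℝ) :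
    p + t • d ∈ frontier C := by
  have hpre : Homeomorph.addRight (t • d) ⁻¹' C = C := by
    ext y
    refine ⟨fun hy => ?_, fun hy => hC y hy t⟩
    simpa using hC _ hy (-t)
  rw [← hpre, ← Homeomorph.preimage_frontier] at hp
  exact hp

end LineInvariance

theorem stmt_10 {m : ℕ}
    (B : Set (EuclideanSpace ℝ (Fin m)))
    (hconv : Convex ℝ B) (hclosed : IsClosed B)
    (a d : EuclideanSpace ℝ (Fin m))
    (hline : ∀ t : ℝ, a + t • d ∈ frontier B) :
    ∀ p ∈ frontier B, ∀ t : ℝ, p + t • d ∈ frontier B := by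
  have hlineB : ∀ t : ℝ, a + t • d ∈ B := fun t => hclosed.frontier_subset (hline t)
  intro p hp t
  exact add_smul_mem_frontier_of_forall_add_smul_mem
    (fun x hx s => hconv.add_smul_mem_of_forall_add_smul_mem hclosed hlineB hx s) hp t
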